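/- arXiv:2503.16894 — 4 statements merged into one kernel-verified Lean document; each statement's English description precedes it below -/
import Mathlib

section
/- Let θ be a ring automorphism of R with θ∘θ = id, and let a be a unit of R with θ(a) = −a. Let X, Y ∈ A satisfy XY = YX, X²Y = 0 and XY² = 0, and for t ∈ R define f(t) = (1 + tX + (t²/2)X²)(1 + θ(t)Y + (θ(t)²/2)Y²). Then 4X = (f(1) − f(−1)) + a^{-1}·(f(a) − f(−a)) and 4Y = (f(1) − f(−1)) − a^{-1}·(f(a) − f(−a)). -/
/-- Let `R` be a commutative ring with `2` invertible, `A` an associative unital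
`R`-algebra, `θ` an order-two ring automorphism of `R` and `a ∈ R*` with `θ(a) = -a`.  Let
`X, Y ∈ A` satisfy `XY = YX`, `X²Y = 0`, `XY² = 0`, and for `t ∈ R` set
`f(t) = (1 + tX + (t²/2)X²)(1 + θ(t)Y + (θ(t)²/2)Y²)`.  Then
`4X = (f(1) - f(-1)) + a⁻¹·(f(a) - f(-a))` and `4Y = (f(1) - f(-1)) - a⁻¹·(f(a) - f(-a))`. -/
theorem recover_X_Y_from_unipotents {R : Type*} [CommRing R] [Invertible (2 : R)]
    {A : Type*} [Ring A] [Algebra R A]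
    (θ : R ≃+* R) (hθ : ∀ r, θ (θ r) = r) (a : Rˣ) (ha : θ (a : R) = -(a : R))
    (X Y : A) (hcomm : X * Y = Y * X) (hX2Y : X ^ 2 * Y = 0) (hXY2 : X * Y ^ 2 = 0)
    (f : R → A)
    (hf : ∀ t : R, f t =
      (1 + t • X + (⅟2 * t ^ 2) • X ^ 2) * (1 + θ t • Y + (⅟2 * (θ t) ^ 2) • Y ^ 2)) :
    (4 : R) • X = (f 1 - f (-1)) + ((a⁻¹ : Rˣ) : R) • (f (a : R) - f (-(a : R))) ∧
    (4 : R) • Y = (f 1 - f (-1)) - ((a⁻¹ : Rˣ) : R) • (f (a : R) - f (-(a : R))) := by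
  have hx2y2 : X ^ 2 * Y ^ 2 = 0 := by
    rw [sq Y, ← mul_assoc, hX2Y, zero_mul]
  have hexp : ∀ t : R, f t =
      1 + t • X + (⅟2 * t ^ 2) • X ^ 2 + θ t • Y + (⅟2 * (θ t) ^ 2) • Y ^ 2
        + (t * θ t) • (X * Y) := by
    intro t
    rw [hf t]
    simp only [mul_add, add_mul, one_mul, mul_one, smul_mul_assoc, mul_smul_comm,
      smul_smul, hX2Y, hXY2, hx2y2, smul_zero]
    module
  have hna : θ (-(a : R)) = (a : R) := by rw [map_neg, ha, neg_neg]
  have h1 : θ (1 : R) = 1 := map_one θ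
  have hn1 : θ (-1 : R) = -1 := by rw [map_neg, h1]
  have hb : ((a⁻¹ : Rˣ) : R) * (a : R) = 1 := Units.inv_mul a
  generalize hbdef : ((a⁻¹ : Rˣ) : R) = b at hb ⊢
  rw [hexp 1, hexp (-1), hexp a, hexp (-a), h1, hn1, ha, hna]
  constructor <;>
  · match_scalars
    all_goals first | ring1 | linear_combination -2 * hb | linear_combination 2 * hb
end

section
/- Let θ be a ring automorphism of R with θ∘θ = id. Let X, Y, Z ∈ A satisfy X²Z = XZ² = Y²Z = YZ² = X²Y² = 0 and X²YZ = XY²Z = XYZ² = 0. For t, u ∈ R set x(t,u) = (1 + tX + (t²/2)X²)(1 + θ(t)Y + (θ(t)²/2)Y²)(1 + uZ + (u²/2)Z²) and F(t,u) = x(t,u) − x(−t,u). Then F(t,u) = 2t·X + 2θ(t)·Y + 2tu·XZ + 2θ(t)u·YZ + t²θ(t)·X²Y + tθ(t)²·XY². -/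
/-- With `R`, `A`, `θ`, `X, Y, Z` as in Statement 4, set
`x(t,u) = (1 + tX + (t²/2)X²)(1 + θ(t)Y + (θ(t)²/2)Y²)(1 + uZ + (u²/2)Z²)` and
`F(t,u) = x(t,u) - x(-t,u)`.  Then
`F(t,u) = 2t·X + 2θ(t)·Y + 2tu·XZ + 2θ(t)u·YZ + t²θ(t)·X²Y + tθ(t)²·XY²`. -/
theorem F_expansion {R : Type*} [CommRing R] [Invertible (2 : R)]
    {A : Type*} [Ring A] [Algebra R A]
    (θ : R ≃+* R) (hθ : ∀ r, θ (θ r) = r)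
    (X Y Z : A)
    (h1 : X ^ 2 * Z = 0) (h2 : X * Z ^ 2 = 0) (h3 : Y ^ 2 * Z = 0) (h4 : Y * Z ^ 2 = 0)
    (h5 : X ^ 2 * Y ^ 2 = 0)
    (h6 : X ^ 2 * Y * Z = 0) (h7 : X * Y ^ 2 * Z = 0) (h8 : X * Y * Z ^ 2 = 0)
    (x : R → R → A)
    (hx : ∀ t u : R, x t u =
      (1 + t • X + (⅟2 * t ^ 2) • X ^ 2) * (1 + θ t • Y + (⅟2 * (θ t) ^ 2) • Y ^ 2) *
        (1 + u • Z + (⅟2 * u ^ 2) • Z ^ 2))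
    (F : R → R → A) (hF : ∀ t u : R, F t u = x t u - x (-t) u) :
    ∀ t u : R,
      F t u = (2 * t) • X + (2 * θ t) • Y + (2 * (t * u)) • (X * Z) +
        (2 * (θ t * u)) • (Y * Z) + (t ^ 2 * θ t) • (X ^ 2 * Y) +
        (t * (θ t) ^ 2) • (X * Y ^ 2) := by
  intro t u
  have z1 : X * (X * Z) = 0 := by rw [← mul_assoc, ← sq]; exact h1
  have z2 : X * (Z * Z) = 0 := by rw [← mul_assoc, mul_assoc, ← sq]; exact h2
  have z3 : Y * (Y * Z) = 0 := by rw [← mul_assoc, ← sq]; exact h3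
  have z4 : Y * (Z * Z) = 0 := by rw [← mul_assoc, mul_assoc, ← sq]; exact h4
  have z5 : X * (X * (Y * Y)) = 0 := by
    rw [← mul_assoc, ← mul_assoc, mul_assoc (X*X), ← sq, ← sq]; exact h5
  have z6 : X * (X * (Y * Z)) = 0 := by
    rw [← mul_assoc, ← mul_assoc, ← sq]; rw [mul_assoc] at h6 ⊢; exact h6
  have z7 : X * (Y * (Y * Z)) = 0 := by
    rw [← mul_assoc, ← mul_assoc, mul_assoc X Y Y, ← sq]; rw [mul_assoc] at h7 ⊢; exact h7
  have z8 : X * (Y * (Z * Z)) = 0 := by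
    rw [← mul_assoc, mul_assoc, ← sq]; rw [mul_assoc] at h8; exact h8
  rw [hF, hx, hx, map_neg θ]
  simp only [sq, mul_add, add_mul, one_mul, mul_one, smul_mul_assoc, mul_smul_comm,
    smul_smul, neg_smul, neg_neg, neg_mul, mul_neg, neg_sq, mul_assoc,
    z1, z2, z3, z4, z5, z6, z7, z8, smul_zero, mul_zero, zero_mul, add_zero, zero_add]
  have hc : (⅟2 : R) * 2 = 1 := invOf_mul_self 2
  match_scalars <;>
    first
      | ring1
      | linear_combination (θ t * t ^ 2) * hc
      | linear_combination (θ t ^ 2 * t) * hc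
end

section
/- Let θ be a ring automorphism of R with θ∘θ = id. Let X, Y, Z ∈ A satisfy X²Z = XZ² = Y²Z = YZ² = X²Y² = 0 and X²YZ = XY²Z = XYZ² = 0. For t, u ∈ R set x(t,u) = (1 + tX + (t²/2)X²)(1 + θ(t)Y + (θ(t)²/2)Y²)(1 + uZ + (u²/2)Z²) and F(t,u) = x(t,u) − x(−t,u). Then 8·F(1, 1/2) − F(2, 2) = 12·(X + Y). -/
theorem expand_aux {R : Type*} [CommRing R] [Invertible (2 : R)]
    {A : Type*} [Ring A] [Algebra R A]
    (X Y Z : A)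
    (h1 : X ^ 2 * Z = 0) (h2 : X * Z ^ 2 = 0) (h3 : Y ^ 2 * Z = 0) (h4 : Y * Z ^ 2 = 0)
    (h5 : X ^ 2 * Y ^ 2 = 0)
    (h6 : X ^ 2 * Y * Z = 0) (h7 : X * Y ^ 2 * Z = 0) (h8 : X * Y * Z ^ 2 = 0)
    (t s u : R) :
    (1 + t • X + (⅟2 * t ^ 2) • X ^ 2) * (1 + s • Y + (⅟2 * s ^ 2) • Y ^ 2) *
        (1 + u • Z + (⅟2 * u ^ 2) • Z ^ 2)
    = 1 + t • X + s • Y + u • Z + (t*s) • (X*Y) + (t*u) • (X*Z) + (s*u) • (Y*Z)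
      + (t*s*u) • (X*(Y*Z)) + (⅟2*t^2) • X^2 + (⅟2*s^2) • Y^2 + (⅟2*u^2) • Z^2
      + (⅟2*t^2*s) • (X^2*Y) + (⅟2*t*s^2) • (X*Y^2) := by
  have e1 : X^2 * Z^2 = 0 := by rw [sq Z, ← mul_assoc, h1, zero_mul]
  have e2 : Y^2 * Z^2 = 0 := by rw [sq Z, ← mul_assoc, h3, zero_mul]
  have e3 : X^2 * Y^2 * Z = 0 := by rw [h5, zero_mul]
  have e4 : X^2 * Y^2 * Z^2 = 0 := by rw [h5, zero_mul]
  have e5 : X^2 * Y * Z^2 = 0 := by rw [sq Z, ← mul_assoc, h6, zero_mul]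
  have e6 : X * Y^2 * Z^2 = 0 := by rw [sq Z, ← mul_assoc, h7, zero_mul]
  simp only [mul_add, add_mul, one_mul, mul_one, smul_mul_assoc, mul_smul_comm, smul_smul,
    mul_assoc] at *
  simp only [h1, h2, h3, h4, h5, h6, h7, h8, e1, e2, e3, e4, e5, e6, mul_zero, smul_zero,
    add_zero, zero_add]
  module

/-- With `R`, `A`, `θ`, `X, Y, Z`, `x(t,u)` and `F(t,u)` as in Statement 5, we have
`8·F(1, 1/2) - F(2, 2) = 12·(X + Y)`. -/
theorem eight_F_sub_F_eq_twelve_sum {R : Type*} [CommRing R] [Invertible (2 : R)]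
    {A : Type*} [Ring A] [Algebra R A]
    (θ : R ≃+* R) (hθ : ∀ r, θ (θ r) = r)
    (X Y Z : A)
    (h1 : X ^ 2 * Z = 0) (h2 : X * Z ^ 2 = 0) (h3 : Y ^ 2 * Z = 0) (h4 : Y * Z ^ 2 = 0)
    (h5 : X ^ 2 * Y ^ 2 = 0)
    (h6 : X ^ 2 * Y * Z = 0) (h7 : X * Y ^ 2 * Z = 0) (h8 : X * Y * Z ^ 2 = 0)
    (x : R → R → A)
    (hx : ∀ t u : R, x t u =
      (1 + t • X + (⅟2 * t ^ 2) • X ^ 2) * (1 + θ t • Y + (⅟2 * (θ t) ^ 2) • Y ^ 2) *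
        (1 + u • Z + (⅟2 * u ^ 2) • Z ^ 2))
    (F : R → R → A) (hF : ∀ t u : R, F t u = x t u - x (-t) u) :
    (8 : R) • F 1 (⅟2) - F 2 2 = (12 : R) • (X + Y) := by
  have key : ∀ t u : R, F t u =
      (2*t) • X + (2*θ t) • Y + (2*(t*u)) • (X*Z) + (2*(θ t*u)) • (Y*Z)
      + (2*(⅟2*t^2*θ t)) • (X^2*Y) + (2*(⅟2*t*(θ t)^2)) • (X*Y^2) := by
    intro t u
    rw [hF, hx, hx,
      expand_aux X Y Z h1 h2 h3 h4 h5 h6 h7 h8 t (θ t) u,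
      expand_aux X Y Z h1 h2 h3 h4 h5 h6 h7 h8 (-t) (θ (-t)) u,
      map_neg]
    module
  rw [key, key, map_one, map_ofNat]
  have hv : (2 : R) * ⅟2 = 1 := mul_invOf_self 2
  match_scalars <;> first
    | ring1
    | linear_combination (8 : R) * hv
end

section
/- Let θ be a ring automorphism of R with θ∘θ = id, and let a be a unit of R with θ(a) = −a. Let X, Y, Z ∈ A satisfy X²Z = XZ² = Y²Z = YZ² = X²Y² = 0 and X²YZ = XY²Z = XYZ² = 0. For t, u ∈ R set x(t,u) = (1 + tX + (t²/2)X²)(1 + θ(t)Y + (θ(t)²/2)Y²)(1 + uZ + (u²/2)Z²) and F(t,u) = x(t,u) − x(−t,u). Then 8·F(a, −a²/2) − F(2a, −2a²) = 12a·(X − Y). -/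
/-- With `R`, `A`, `θ`, `X, Y, Z`, `x(t,u)` and `F(t,u)` as in Statement 5, and a
unit `a ∈ R*` with `θ(a) = -a`, we have `8·F(a, -a²/2) - F(2a, -2a²) = 12a·(X - Y)`. -/
theorem eight_F_sub_F_eq_twelve_a_diff {R : Type*} [CommRing R] [Invertible (2 : R)]
    {A : Type*} [Ring A] [Algebra R A]
    (θ : R ≃+* R) (hθ : ∀ r, θ (θ r) = r) (a : Rˣ) (ha : θ (a : R) = -(a : R))
    (X Y Z : A)
    (h1 : X ^ 2 * Z = 0) (h2 : X * Z ^ 2 = 0) (h3 : Y ^ 2 * Z = 0) (h4 : Y * Z ^ 2 = 0)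
    (h5 : X ^ 2 * Y ^ 2 = 0)
    (h6 : X ^ 2 * Y * Z = 0) (h7 : X * Y ^ 2 * Z = 0) (h8 : X * Y * Z ^ 2 = 0)
    (x : R → R → A)
    (hx : ∀ t u : R, x t u =
      (1 + t • X + (⅟2 * t ^ 2) • X ^ 2) * (1 + θ t • Y + (⅟2 * (θ t) ^ 2) • Y ^ 2) *
        (1 + u • Z + (⅟2 * u ^ 2) • Z ^ 2))
    (F : R → R → A) (hF : ∀ t u : R, F t u = x t u - x (-t) u) :
    (8 : R) • F (a : R) (-(⅟2 * (a : R) ^ 2)) - F (2 * (a : R)) (-(2 * (a : R) ^ 2)) =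
      (12 * (a : R)) • (X - Y) := by
  have h2a : θ (2 * (a:R)) = -(2 * a) := by rw [map_mul, ha, map_ofNat]; ring
  simp only [hF, hx, map_neg, ha, h2a]
  simp only [pow_two] at h1 h2 h3 h4 h5 h6 h7 h8
  simp only [mul_assoc] at h1 h2 h3 h4 h5 h6 h7 h8
  have z1 : X*(X*(Z*Z)) = 0 := by have := congrArg (· * Z) h1; simpa [mul_assoc] using this
  have z2 : Y*(Y*(Z*Z)) = 0 := by have := congrArg (· * Z) h3; simpa [mul_assoc] using this
  have z3 : X*(X*(Y*(Z*Z))) = 0 := by have := congrArg (· * Z) h6; simpa [mul_assoc] using this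
  have z4 : X*(Y*(Y*(Z*Z))) = 0 := by have := congrArg (· * Z) h7; simpa [mul_assoc] using this
  have z6 : X*(X*(Y*(Y*(Z*Z)))) = 0 := by have := congrArg (X * ·) z4; simpa using this
  have z5 : X*(X*(Y*(Y*Z))) = 0 := by have := congrArg (X * ·) h7; simpa using this
  simp only [pow_two, mul_add, add_mul, one_mul, mul_one, smul_mul_assoc, mul_smul_comm,
    smul_smul, mul_assoc, h1, h2, h3, h4, h5, h6, h7, h8, z1, z2, z3, z4, z5, z6,
    smul_zero, add_zero, zero_add, mul_zero, zero_mul]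
  match_scalars
  all_goals try ring1
  · linear_combination (-8*(a:R)^3) * (mul_invOf_self (2:R))
  · linear_combination (8*(a:R)^3) * (mul_invOf_self (2:R))
end
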